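/- Let X₁ take values −1, 0, 1 each with probability 1/3, Sₙ the sum of n i.i.d. copies, N ≥ 2, X₀ uniform on {0,…,N−1} independent of the walk, and Rₙ = (X₀ + Sₙ) mod N. Then there exists a constant c₇ > 0 (independent of N) such that P(⋃_{n=1}^N {Rₙ = n mod N}) ≥ c₇. -/

import Mathlib

open MeasureTheory ProbabilityTheory Finset ENNReal

/-!
Write `u n = n - S n` for the hunter's lead over the walk: the rabbit started at `a` is caught
at time `n` exactly when `a ≡ u n [ZMOD N]`. With steps in `{-1, 0, 1}` the lead is nondecreasing,
takes values in `[0, 2N]`, and strictly increases at every step that is not `+1`; since a residue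
class meets `[0, 3N)` in three points, at least a third as many starting points are caught as
there are steps other than `+1`. So `N ≤ 3 · #caught + #{+1 steps}`; taking expectations, with
`E #{+1 steps} = N / 3`, gives `E #caught ≥ 2N / 9`, and the catch probability is `E #caught / N`.
-/

theorem card_le_mul_card_image_emod {s : Finset ℤ} {N k : ℕ} (hs : ∀ v ∈ s, v ∈ Set.Ico 0 ((k : ℤ) * N)) :
    #s ≤ k * #(s.image (· % (N : ℤ))) := by
  refine card_le_mul_card_image s k fun r _ => ?_
  have hmaps : ∀ v ∈ {v ∈ s | v % N = r}, v / N ∈ Ico (0 : ℤ) k := by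
    intro v hv
    obtain ⟨h0, hlt⟩ := hs v (mem_filter.mp hv).1
    have hN : (0 : ℤ) < N := by by_contra h; push Not at h; nlinarith
    exact mem_Ico.mpr ⟨Int.ediv_nonneg h0 hN.le, Int.ediv_lt_of_lt_mul hN hlt⟩
  have hinj : Set.InjOn (· / (N : ℤ)) ↑{v ∈ s | v % N = r} := by
    intro v hv w hw hvw
    simp only [coe_filter, Set.mem_ofPred_eq] at hv hw
    rw [← Int.mul_ediv_add_emod v N, ← Int.mul_ediv_add_emod w N, hv.2, hw.2]
    exact congrArg (N * · + r) hvw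
  simpa using card_le_card_of_injOn _ hmaps hinj

section Pursuit

variable (N : ℕ) (x : ℕ → ℤ)

open Classical in
noncomputable def caughtStarts : Finset ℕ :=
  {a ∈ range N | ∃ n, 1 ≤ n ∧ n ≤ N ∧ ((a : ℤ) + ∑ j ∈ range n, x j) % N = (n : ℤ) % N}

def hunterLead (n : ℕ) : ℤ := n - ∑ j ∈ range n, x j

theorem hunterLead_succ (n : ℕ) : hunterLead x (n + 1) = hunterLead x n + (1 - x n) := by
  simp only [hunterLead, sum_range_succ]; push_cast; ring

variable {N x}

theorem hunterLead_le_of_le (hx : ∀ j < N, x j ≤ 1) {m n : ℕ} (hmn : m ≤ n) (hn : n ≤ N) :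
    hunterLead x m ≤ hunterLead x n := by
  induction n, hmn using Nat.le_induction with
  | base => rfl
  | succ n _ ih => rw [hunterLead_succ]; linarith [ih (by omega), hx n (by omega)]

theorem hunterLead_mem_Icc (hx : ∀ j < N, x j ∈ Set.Icc (-1) 1) {n : ℕ} (hn : n ≤ N) :
    hunterLead x n ∈ Set.Icc 0 (2 * (n : ℤ)) := by
  induction n with
  | zero => simp [hunterLead]
  | succ n ih =>
    rw [hunterLead_succ]
    obtain ⟨hx₁, hx₂⟩ := hx n (by omega)
    obtain ⟨hu₁, hu₂⟩ := ih (by omega)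
    push_cast; constructor <;> linarith

theorem card_filter_ne_one_le_card_image_hunterLead (hx : ∀ j < N, x j ≤ 1) :
    #{j ∈ range N | x j ≠ 1} ≤ #((Icc 1 N).image (hunterLead x)) := by
  have hmono : StrictMonoOn (fun j => hunterLead x (j + 1)) ↑{j ∈ range N | x j ≠ 1} := by
    intro a ha b hb hab
    simp only [coe_filter, mem_range, Set.mem_ofPred_eq] at ha hb
    have hb0 : x b ≤ 0 := by have := hx b hb.1; omega
    calc hunterLead x (a + 1) ≤ hunterLead x b := hunterLead_le_of_le hx hab hb.1.le
      _ < hunterLead x (b + 1) := by rw [hunterLead_succ]; linarith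
  refine card_le_card_of_injOn _ (fun j hj => ?_) hmono.injOn
  have := mem_range.mp (mem_filter.mp hj).1
  exact mem_image_of_mem _ (mem_Icc.mpr ⟨by omega, by omega⟩)

theorem toNat_emod_hunterLead_mem_caughtStarts (hN : N ≠ 0) {n : ℕ} (h1 : 1 ≤ n) (hn : n ≤ N) :
    (hunterLead x n % N).toNat ∈ caughtStarts N x := by
  have hNpos : (0 : ℤ) < N := by exact_mod_cast Nat.pos_of_ne_zero hN
  have hcast : ((hunterLead x n % N).toNat : ℤ) = hunterLead x n % N :=
    Int.toNat_of_nonneg (Int.emod_nonneg _ hNpos.ne')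
  simp only [caughtStarts, mem_filter, mem_range]
  refine ⟨by have := Int.emod_lt_of_pos (hunterLead x n) hNpos; omega, n, h1, hn, ?_⟩
  rw [hcast, Int.emod_add_emod, hunterLead, sub_add_cancel]

theorem card_image_emod_hunterLead_le_card_caughtStarts (hN : N ≠ 0) :
    #(((Icc 1 N).image (hunterLead x)).image (· % (N : ℤ))) ≤ #(caughtStarts N x) := by
  have hNz : (N : ℤ) ≠ 0 := by exact_mod_cast hN
  refine card_le_card_of_injOn Int.toNat (fun r hr => ?_) fun r hr s hs hrs => ?_
  · simp only [coe_image, Set.mem_image, mem_coe, mem_Icc] at hr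
    obtain ⟨_, ⟨n, hn, rfl⟩, rfl⟩ := hr
    exact toNat_emod_hunterLead_mem_caughtStarts hN hn.1 hn.2
  · simp only [coe_image, Set.mem_image] at hr hs
    obtain ⟨_, -, rfl⟩ := hr
    obtain ⟨_, -, rfl⟩ := hs
    simpa [Int.emod_nonneg _ hNz] using congrArg Int.ofNat hrs

theorem caughtStarts_subset_range : caughtStarts N x ⊆ range N := by
  classical exact filter_subset _ _

end Pursuit

theorem le_three_mul_card_caughtStarts_add {N : ℕ} {x : ℕ → ℤ}
    (hx : ∀ j < N, x j ∈ Set.Icc (-1) 1) :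
    N ≤ 3 * #(caughtStarts N x) + #{j ∈ range N | x j = 1} := by
  rcases Nat.eq_zero_or_pos N with rfl | hN
  · simp
  have hV : ∀ v ∈ (Icc 1 N).image (hunterLead x), v ∈ Set.Ico 0 (3 * (N : ℤ)) := by
    simp only [mem_image, mem_Icc]
    rintro _ ⟨n, ⟨-, hn⟩, rfl⟩
    obtain ⟨hu₁, hu₂⟩ := hunterLead_mem_Icc hx hn
    constructor <;> omega
  have hsteps := card_filter_ne_one_le_card_image_hunterLead fun j hj => (hx j hj).2
  have hfibres := card_le_mul_card_image_emod (k := 3) hV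
  have hcaught := card_image_emod_hunterLead_le_card_caughtStarts (x := x) hN.ne'
  have hsplit := card_filter_add_card_filter_not (s := range N) (p := fun j => x j = 1)
  simp only [card_range, ← ne_eq] at hsplit
  omega

section RandomFinset

variable {Ω ι : Type*} {s : Finset ι} {T : Ω → Finset ι}

theorem natCast_card_eq_sum_indicator (hT : ∀ ω, T ω ⊆ s) (ω : Ω) :
    (#(T ω) : ℝ≥0∞) = ∑ i ∈ s, {ω | i ∈ T ω}.indicator 1 ω := by
  classical
  simp only [Set.indicator_apply, Set.mem_ofPred_eq, Pi.one_apply, sum_boole,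
    filter_mem_eq_inter, inter_eq_right.mpr (hT ω)]

theorem measurable_natCast_card [MeasurableSpace Ω] (hT : ∀ ω, T ω ⊆ s)
    (hmeas : ∀ i ∈ s, MeasurableSet {ω | i ∈ T ω}) :
    Measurable fun ω => (#(T ω) : ℝ≥0∞) := by
  simp only [natCast_card_eq_sum_indicator hT]
  exact Finset.measurable_sum _ fun i hi => measurable_one.indicator (hmeas i hi)

theorem lintegral_card_eq_sum_measure [MeasurableSpace Ω] (μ : Measure Ω) (hT : ∀ ω, T ω ⊆ s)
    (hmeas : ∀ i ∈ s, MeasurableSet {ω | i ∈ T ω}) :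
    ∫⁻ ω, (#(T ω) : ℝ≥0∞) ∂μ = ∑ i ∈ s, μ {ω | i ∈ T ω} := by
  simp only [natCast_card_eq_sum_indicator hT]
  rw [lintegral_finsetSum _ fun i hi => measurable_one.indicator (hmeas i hi)]
  exact sum_congr rfl fun i hi => lintegral_indicator_one (hmeas i hi)

end RandomFinset

theorem lintegral_uniformOfFinset {α : Type*} [MeasurableSpace α] [Countable α]
    [MeasurableSingletonClass α] (s : Finset α) (hs : s.Nonempty) (f : α → ℝ≥0∞) :
    ∫⁻ a, f a ∂(PMF.uniformOfFinset s hs).toMeasure = (∑ a ∈ s, f a) / #s := by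
  rw [lintegral_countable', tsum_eq_sum (s := s) fun a ha => by
    rw [PMF.toMeasure_apply_singleton _ _ (measurableSet_singleton a),
      PMF.uniformOfFinset_apply_of_notMem hs ha, mul_zero]]
  rw [div_eq_mul_inv, sum_mul]
  refine sum_congr rfl fun a ha => ?_
  rw [PMF.toMeasure_apply_singleton _ _ (measurableSet_singleton a),
    PMF.uniformOfFinset_apply_of_mem hs ha]

theorem ae_mem_of_sum_measure_preimage_singleton_eq_one {Ω β : Type*} [MeasurableSpace Ω]
    [MeasurableSpace β] [MeasurableSingletonClass β] {μ : Measure Ω} [IsProbabilityMeasure μ]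
    {Y : Ω → β} (hY : Measurable Y) {s : Finset β} (h : ∑ b ∈ s, μ (Y ⁻¹' {b}) = 1) :
    ∀ᵐ ω ∂μ, Y ω ∈ s := by
  rw [sum_measure_preimage_singleton s fun b _ => hY (measurableSet_singleton b),
    ← prob_compl_eq_zero_iff (hY s.measurableSet)] at h
  exact measure_eq_zero_iff_ae_notMem.mp h |>.mono fun ω hω => by simpa using hω

theorem uniformOfFinset_prod_catch_eq {Ω : Type*} [MeasurableSpace Ω] (μ : Measure Ω) [SFinite μ]
    {X : ℕ → Ω → ℤ} (hX : ∀ i, Measurable (X i)) {N : ℕ} (hN : (range N).Nonempty) :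
    ((PMF.uniformOfFinset (range N) hN).toMeasure.prod μ)
        {z : ℕ × Ω | ∃ n, 1 ≤ n ∧ n ≤ N ∧
          ((z.1 : ℤ) + ∑ j ∈ range n, X j z.2) % (N : ℤ) = (n : ℤ) % (N : ℤ)} =
      (∫⁻ ω, (#(caughtStarts N fun j => X j ω) : ℝ≥0∞) ∂μ) / N := by
  set E := {z : ℕ × Ω | ∃ n, 1 ≤ n ∧ n ≤ N ∧
    ((z.1 : ℤ) + ∑ j ∈ range n, X j z.2) % (N : ℤ) = (n : ℤ) % (N : ℤ)}
  have hE : MeasurableSet E := by measurability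
  have hsection : ∀ a ∈ range N, Prod.mk a ⁻¹' E = {ω | a ∈ caughtStarts N fun j => X j ω} := by
    intro a ha
    ext ω
    simp [E, caughtStarts, mem_range.mp ha]
  rw [Measure.prod_apply hE, lintegral_uniformOfFinset, card_range,
    lintegral_card_eq_sum_measure μ (fun _ => caughtStarts_subset_range)
      fun a ha => hsection a ha ▸ measurable_prodMk_left hE]
  exact congrArg (· / _) (sum_congr rfl fun a ha => by rw [hsection a ha])

theorem setOf_mem_filter_range_eq {Ω β : Type*} [DecidableEq β] (X : ℕ → Ω → β) {N j : ℕ}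
    (hj : j ∈ range N) (b : β) : {ω | j ∈ {i ∈ range N | X i ω = b}} = X j ⁻¹' {b} := by
  ext ω
  simp [mem_range.mp hj]

section IdentDistrib

variable {Ω β : Type*} [MeasurableSpace Ω] [MeasurableSpace β] [MeasurableSingletonClass β]
  [DecidableEq β] {μ : Measure Ω} {X : ℕ → Ω → β}

theorem measurable_card_filter_range_eq (hX : ∀ i, Measurable (X i)) (N : ℕ) (b : β) :
    Measurable fun ω => (#{i ∈ range N | X i ω = b} : ℝ≥0∞) :=
  measurable_natCast_card (fun _ => filter_subset _ _) fun j hj =>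
    setOf_mem_filter_range_eq X hj b ▸ hX j (measurableSet_singleton b)

theorem lintegral_card_filter_range_eq (hX : ∀ i, Measurable (X i))
    (hident : ∀ i, IdentDistrib (X i) (X 0) μ μ) (N : ℕ) (b : β) :
    ∫⁻ ω, (#{i ∈ range N | X i ω = b} : ℝ≥0∞) ∂μ = N * μ {ω | X 0 ω = b} := by
  rw [lintegral_card_eq_sum_measure μ (fun _ => filter_subset _ _) fun j hj =>
    setOf_mem_filter_range_eq X hj b ▸ hX j (measurableSet_singleton b)]
  rw [sum_congr rfl fun j hj => by
    rw [setOf_mem_filter_range_eq X hj b, (hident j).measure_mem_eq (measurableSet_singleton b)],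
    sum_const, card_range, nsmul_eq_mul]
  rfl

end IdentDistrib

theorem ae_forall_mem_Icc_of_uniform_three_point {Ω : Type*} [MeasurableSpace Ω] {μ : Measure Ω}
    [IsProbabilityMeasure μ] {X : ℕ → Ω → ℤ} (hX : ∀ i, Measurable (X i))
    (hident : ∀ i, IdentDistrib (X i) (X 0) μ μ) (hm1 : μ {ω | X 0 ω = -1} = 1 / 3)
    (h0 : μ {ω | X 0 ω = 0} = 1 / 3) (h1 : μ {ω | X 0 ω = 1} = 1 / 3) :
    ∀ᵐ ω ∂μ, ∀ j, X j ω ∈ Set.Icc (-1) 1 := by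
  have hX0 : ∀ᵐ ω ∂μ, X 0 ω ∈ ({-1, 0, 1} : Finset ℤ) := by
    refine ae_mem_of_sum_measure_preimage_singleton_eq_one (hX 0) ?_
    rw [sum_insert (by decide), sum_pair (by decide)]
    change μ {ω | X 0 ω = -1} + (μ {ω | X 0 ω = 0} + μ {ω | X 0 ω = 1}) = 1
    rw [hm1, h0, h1, ← add_assoc, ENNReal.add_thirds]
  refine (ae_all_iff.2 fun j => (hident j).symm.ae_mem_snd (Finset.measurableSet _) hX0).mono
    fun ω h j => ?_
  have := h j
  simp only [coe_insert, coe_singleton, Set.mem_insert_iff, Set.mem_singleton_iff] at this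
  rw [Set.mem_Icc]
  omega

theorem ENNReal.two_div_nine_le_div_of_le_three_mul_add {a n : ℝ≥0∞} (hn0 : n ≠ 0) (hn : n ≠ ∞)
    (h : n ≤ 3 * a + n / 3) : 2 / 9 ≤ a / n := by
  rw [ENNReal.le_div_iff_mul_le (Or.inl hn0) (Or.inl hn)]
  rcases eq_or_ne a ∞ with rfl | ha
  · simp
  lift a to NNReal using ha
  lift n to NNReal using hn
  rw [← ENNReal.coe_ofNat 3, ← ENNReal.coe_mul, ← ENNReal.coe_div (by norm_num),
    ← ENNReal.coe_add, ENNReal.coe_le_coe, ← NNReal.coe_le_coe] at h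
  rw [← ENNReal.coe_ofNat 2, ← ENNReal.coe_ofNat 9, ← ENNReal.coe_div (by norm_num),
    ← ENNReal.coe_mul, ENNReal.coe_le_coe, ← NNReal.coe_le_coe]
  push_cast at h ⊢
  linarith

theorem lazy_walk_catch_prob_lower_bound {Ω : Type*} [MeasurableSpace Ω] (μ : Measure Ω)
    [IsProbabilityMeasure μ] (X : ℕ → Ω → ℤ) (hX : ∀ i, Measurable (X i))
    (hident : ∀ i, IdentDistrib (X i) (X 0) μ μ)
    (hm1 : μ {ω | X 0 ω = -1} = 1 / 3)
    (h0 : μ {ω | X 0 ω = 0} = 1 / 3)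
    (h1 : μ {ω | X 0 ω = 1} = 1 / 3) :
    ∃ c₇ : ℝ≥0∞, 0 < c₇ ∧ ∀ N : ℕ, ∀ hN : 2 ≤ N,
      c₇ ≤ ((PMF.uniformOfFinset (Finset.range N)
            (Finset.nonempty_range_iff.mpr (by omega))).toMeasure.prod μ)
        {z : ℕ × Ω | ∃ n, 1 ≤ n ∧ n ≤ N ∧
          ((z.1 : ℤ) + ∑ j ∈ Finset.range n, X j z.2) % (N : ℤ) = (n : ℤ) % (N : ℤ)} := by
  refine ⟨2 / 9, by norm_num, fun N hN => ?_⟩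
  have hsteps := ae_forall_mem_Icc_of_uniform_three_point hX hident hm1 h0 h1
  have hcount : (N : ℝ≥0∞) ≤
      3 * ∫⁻ ω, (#(caughtStarts N fun j => X j ω) : ℝ≥0∞) ∂μ + N / 3 := by
    calc (N : ℝ≥0∞) = ∫⁻ _, (N : ℝ≥0∞) ∂μ := by simp
      _ ≤ ∫⁻ ω, 3 * (#(caughtStarts N fun j => X j ω) : ℝ≥0∞) +
            #{j ∈ range N | X j ω = 1} ∂μ :=
        lintegral_mono_ae <| hsteps.mono fun ω hω => by
          exact_mod_cast le_three_mul_card_caughtStarts_add fun j _ => hω j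
      _ = _ := by
        rw [lintegral_add_right _ (measurable_card_filter_range_eq hX N 1),
          lintegral_const_mul' _ _ (by norm_num), lintegral_card_filter_range_eq hX hident,
          h1, mul_one_div]
  rw [uniformOfFinset_prod_catch_eq μ hX]
  exact ENNReal.two_div_nine_le_div_of_le_three_mul_add (Nat.cast_ne_zero.mpr (by omega)) (natCast_ne_top N) hcount
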